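/- Let n ≥ 1 be an integer. For every integer k ≥ 0 and every λ ∈ ℝ, the function r ↦ ψ_k^λ(r) is nondecreasing on (0,∞). (This follows since ψ_k^λ(r) also equals (1/2)(Γ((n+1)/2)/(√π Γ(n/2))) (k!(n−1)!/(k+n−1)!) ∫_{−π/2}^{π/2} cosh((1/2)λ r² sinθ) L_k^{n−1}(−2|λ| r² cosθ) e^{|λ| r² cosθ} (cosθ)^{n−1} dθ, and L_k^{n−1}(−t) for t ≥ 0 is a polynomial in t with nonnegative coefficients.) -/

import Mathlib

/-!
With `s = r ^ 2`, pairing `θ` with `-θ` in the integral over the symmetric interval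
`(-π/2, π/2)` replaces `exp (λ s sin θ / 2)` by `cosh (λ s sin θ / 2)`, which is nondecreasing in
`s ≥ 0`. Since `cos θ > 0` there, the other factors `L_k^{n-1}(-2|λ| s cos θ)` (a polynomial in
`s` with nonnegative coefficients) and `exp (|λ| s cos θ)` are nonnegative and nondecreasing in
`s` as well, and the normalising constant in front of the integral is nonnegative.
-/

open MeasureTheory

/-- The Laguerre polynomial of type `n−1`:
`L_k^{n−1}(x) = Σ_{j=0}^k (−1)^j ((k+n−1)!/((k−j)!(n−1+j)! j!)) x^j`. -/
noncomputable def laguerre (n k : ℕ) (x : ℝ) : ℝ :=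
  ∑ j ∈ Finset.range (k + 1),
    (-1 : ℝ) ^ j *
      ((Nat.factorial (k + n - 1) : ℝ) /
        ((Nat.factorial (k - j) : ℝ) * (Nat.factorial (n - 1 + j) : ℝ) *
          (Nat.factorial j : ℝ))) * x ^ j

/-- The function `ψ_k^λ(r)`. -/
noncomputable def psiFun (n k : ℕ) (lam r : ℝ) : ℝ :=
  (Real.Gamma (((n : ℝ) + 1) / 2) / (Real.sqrt Real.pi * Real.Gamma ((n : ℝ) / 2))) *
    ((Nat.factorial k : ℝ) * (Nat.factorial (n - 1) : ℝ) / (Nat.factorial (k + n - 1) : ℝ)) *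
    ∫ θ in Set.Ioo (-(Real.pi / 2)) (Real.pi / 2),
      Real.exp ((1 / 2) * lam * r ^ 2 * Real.sin θ) *
        laguerre n k (-2 * |lam| * r ^ 2 * Real.cos θ) *
        Real.exp (|lam| * r ^ 2 * Real.cos θ) * (Real.cos θ) ^ (n - 1)

open Set Real

theorem integral_comp_neg_Ioo {E : Type*} [NormedAddCommGroup E] [NormedSpace ℝ E]
    (a b : ℝ) (f : ℝ → E) : ∫ x in Ioo a b, f (-x) = ∫ x in Ioo (-b) (-a), f x := by
  have hneg : MeasurableEmbedding fun x : ℝ => -x :=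
    (Homeomorph.neg ℝ).isClosedEmbedding.measurableEmbedding
  have hmap := hneg.setIntegral_map (μ := volume) f (Ioo (-b) (-a))
  rw [Measure.map_neg_eq_self (volume : Measure ℝ)] at hmap
  rw [hmap, neg_preimage, neg_Ioo, neg_neg, neg_neg]

theorem monotoneOn_integral_Ioo_of_monotoneOn_add_comp_neg {F : ℝ → ℝ → ℝ} {S : Set ℝ} {c : ℝ}
    (hF : ∀ s ∈ S, IntegrableOn (F s) (Ioo (-c) c))
    (hmono : ∀ θ ∈ Ioo (-c) c, MonotoneOn (fun s => F s θ + F s (-θ)) S) :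
    MonotoneOn (fun s => ∫ θ in Ioo (-c) c, F s θ) S := by
  have hF_neg : ∀ s ∈ S, IntegrableOn (fun θ => F s (-θ)) (Ioo (-c) c) := fun s hs => by
    simpa only [neg_Ioo, neg_neg] using (hF s hs).comp_neg
  have hsymm : ∀ s ∈ S,
      2 * ∫ θ in Ioo (-c) c, F s θ = ∫ θ in Ioo (-c) c, (F s θ + F s (-θ)) := fun s hs => by
    rw [integral_add (hF s hs) (hF_neg s hs), integral_comp_neg_Ioo, neg_neg, two_mul]
  intro s₁ hs₁ s₂ hs₂ hle
  suffices 2 * ∫ θ in Ioo (-c) c, F s₁ θ ≤ 2 * ∫ θ in Ioo (-c) c, F s₂ θ by linarith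
  rw [hsymm s₁ hs₁, hsymm s₂ hs₂]
  exact setIntegral_mono_on ((hF s₁ hs₁).add (hF_neg s₁ hs₁)) ((hF s₂ hs₂).add (hF_neg s₂ hs₂))
    measurableSet_Ioo fun θ hθ => hmono θ hθ hs₁ hs₂ hle

theorem laguerre_neg (n k : ℕ) (x : ℝ) :
    laguerre n k (-x) = ∑ j ∈ Finset.range (k + 1),
      ((Nat.factorial (k + n - 1) : ℝ) /
        ((Nat.factorial (k - j) : ℝ) * (Nat.factorial (n - 1 + j) : ℝ) *
          (Nat.factorial j : ℝ))) * x ^ j := by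
  refine Finset.sum_congr rfl fun j _ => ?_
  rw [neg_pow x]
  ring_nf
  simp

theorem laguerre_neg_nonneg (n k : ℕ) {u : ℝ} (hu : 0 ≤ u) : 0 ≤ laguerre n k (-u) := by
  rw [laguerre_neg]
  exact Finset.sum_nonneg fun j _ => by positivity

theorem monotoneOn_laguerre_neg (n k : ℕ) : MonotoneOn (fun u => laguerre n k (-u)) (Ici 0) :=
  fun u hu v _ huv => by
    simp only [laguerre_neg]
    gcongr

theorem continuous_laguerre (n k : ℕ) : Continuous (laguerre n k) :=
  continuous_finsetSum _ fun j _ => continuous_const.mul (continuous_pow j)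

noncomputable def psiIntegrand (n k : ℕ) (lam s θ : ℝ) : ℝ :=
  exp ((1 / 2) * lam * s * sin θ) * laguerre n k (-2 * |lam| * s * cos θ) *
    exp (|lam| * s * cos θ) * cos θ ^ (n - 1)

theorem continuous_psiIntegrand (n k : ℕ) (lam s : ℝ) : Continuous (psiIntegrand n k lam s) := by
  unfold psiIntegrand
  have hL := continuous_laguerre n k
  fun_prop

theorem psiIntegrand_add_comp_neg (n k : ℕ) (lam s θ : ℝ) :
    psiIntegrand n k lam s θ + psiIntegrand n k lam s (-θ) =
      2 * cosh (lam * sin θ / 2 * s) * laguerre n k (-(2 * |lam| * cos θ * s)) *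
        exp (|lam| * cos θ * s) * cos θ ^ (n - 1) := by
  rw [psiIntegrand, psiIntegrand, sin_neg, cos_neg, cosh_eq]
  ring_nf

theorem monotoneOn_psiIntegrand_add_comp_neg (n k : ℕ) (lam : ℝ) {θ : ℝ} (hθ : 0 ≤ cos θ) :
    MonotoneOn (fun s => psiIntegrand n k lam s θ + psiIntegrand n k lam s (-θ)) (Ici 0) := by
  intro s₁ hs₁ s₂ hs₂ hle
  simp only [psiIntegrand_add_comp_neg]
  rw [mem_Ici] at hs₁ hs₂
  have hcosh : cosh (lam * sin θ / 2 * s₁) ≤ cosh (lam * sin θ / 2 * s₂) := by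
    rw [cosh_le_cosh, abs_mul, abs_mul, abs_of_nonneg hs₁, abs_of_nonneg hs₂]
    gcongr
  have hL := monotoneOn_laguerre_neg n k (by positivity : 0 ≤ 2 * |lam| * cos θ * s₁)
    (by positivity : 0 ≤ 2 * |lam| * cos θ * s₂) (by gcongr)
  have hL₁ := laguerre_neg_nonneg n k (by positivity : 0 ≤ 2 * |lam| * cos θ * s₁)
  have hL₂ := laguerre_neg_nonneg n k (by positivity : 0 ≤ 2 * |lam| * cos θ * s₂)
  gcongr

theorem stmt_12_general (n : ℕ) (k : ℕ) (lam : ℝ) :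
    MonotoneOn (fun r => psiFun n k lam r) (Set.Ioi (0 : ℝ)) := by
  have hI : MonotoneOn (fun s => ∫ θ in Ioo (-(π / 2)) (π / 2), psiIntegrand n k lam s θ)
      (Ici 0) :=
    monotoneOn_integral_Ioo_of_monotoneOn_add_comp_neg
      (fun s _ => (continuous_psiIntegrand n k lam s).integrableOn_Icc.mono_set
        Ioo_subset_Icc_self)
      fun θ hθ => monotoneOn_psiIntegrand_add_comp_neg n k lam (cos_pos_of_mem_Ioo hθ).le
  have hsq : MonotoneOn (fun r : ℝ => r ^ 2) (Ioi 0) :=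
    fun r₁ hr₁ _ _ hle => pow_le_pow_left₀ (le_of_lt hr₁) hle 2
  intro r₁ hr₁ r₂ hr₂ hle
  exact mul_le_mul_of_nonneg_left (hI.comp hsq (fun r _ => sq_nonneg r) hr₁ hr₂ hle)
    (by positivity)

/-- `r ↦ ψ_k^λ(r)` is nondecreasing on `(0,∞)`. -/
theorem stmt_12 (n : ℕ) (hn : 1 ≤ n) (k : ℕ) (lam : ℝ) :
    MonotoneOn (fun r => psiFun n k lam r) (Set.Ioi (0 : ℝ)) :=
  stmt_12_general n k lam
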